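/- Let A be a commutative ℚ-algebra and φ a ring endomorphism of A with φ^i = φ^j for some 1 ≤ i < j. Then M = (1−φ)(A) is a Mathieu–Zhao space of A: for every a with a^m ∈ M for all large m, and every b ∈ A, one has b·a^m ∈ M for all sufficiently large m. -/

import Mathlib

/-!
Put `T = ∑_{i ≤ k < j} φ^k`. Telescoping shows that `T` kills `(1 - φ)(A)`, and conversely
`y = (1 - φ)(c)` for `c = (j - i)⁻¹ ∑_{i ≤ k < j} ∑_{s < k} φ^s y` whenever `T y = 0`; so
`(1 - φ)(A) = ker T`. If `a^m ∈ ker T` for all large `m`, the elements `φ^k a` (`i ≤ k < j`) have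
eventually vanishing power sums, so by Newton's identities over `ℚ` they are nilpotent. Then
`φ^k (b a^m) = φ^k b · (φ^k a)^m = 0` for large `m`, hence `T (b a^m) = 0`.
-/

open Finset Polynomial Filter

section

variable {A : Type*} [CommRing A]

theorem Multiset.prod_X_sub_C_eq_X_pow_of_esymm_eq_zero (s : Multiset A)
    (h : ∀ k ≠ 0, s.esymm k = 0) :
    (s.map fun t => X - C t).prod = X ^ Multiset.card s := by
  rw [Multiset.prod_X_sub_X_eq_sum_esymm, sum_eq_single 0]
  · simp [Multiset.esymm]
  · intro k _ hk
    rw [h k hk, C_0, zero_mul, mul_zero]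
  · simp

theorem Multiset.pow_card_eq_zero_of_esymm_eq_zero {s : Multiset A}
    (h : ∀ k ≠ 0, s.esymm k = 0) {x : A} (hx : x ∈ s) : x ^ Multiset.card s = 0 := by
  have hroot := congrArg (eval x) (s.prod_X_sub_C_eq_X_pow_of_esymm_eq_zero h)
  rw [eval_multiset_prod, Multiset.prod_eq_zero] at hroot
  · simpa using hroot.symm
  · exact Multiset.mem_map.2 ⟨X - C x, Multiset.mem_map_of_mem _ hx, by simp⟩

section Endomorphism

variable (φ : A →+* A)

theorem sum_Ico_pow_apply_sub_apply (c : A) {i j : ℕ} (hij : i ≤ j) :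
    ∑ k ∈ Ico i j, (φ ^ k) (c - φ c) = (φ ^ i) c - (φ ^ j) c := by
  have hstep : ∀ k, (φ ^ k) (c - φ c) = -((φ ^ (k + 1)) c - (φ ^ k) c) := fun k => by
    rw [map_sub, pow_succ, RingHom.mul_def, RingHom.comp_apply, neg_sub]
  simp_rw [hstep, sum_neg_distrib, sum_Ico_sub (fun k => (φ ^ k) c) hij, neg_sub]

theorem sum_range_pow_apply_sub_apply (y : A) (k : ℕ) :
    ∑ s ∈ range k, (φ ^ s) y - φ (∑ s ∈ range k, (φ ^ s) y) = y - (φ ^ k) y := by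
  have hstep : ∀ s, (φ ^ s) y - φ ((φ ^ s) y) = (φ ^ s) y - (φ ^ (s + 1)) y := fun s => by
    rw [pow_succ', RingHom.mul_def, RingHom.comp_apply]
  rw [map_sum, ← sum_sub_distrib]
  simp_rw [hstep]
  rw [sum_range_sub' (fun s => (φ ^ s) y), pow_zero, RingHom.one_def, RingHom.id_apply]

end Endomorphism

variable [Algebra ℚ A]

theorem esymm_eq_zero_of_sum_pow_eq_zero {σ : Type*} [Fintype σ] (x : σ → A)
    (h : ∀ m ≠ 0, ∑ t, x t ^ m = 0) {k : ℕ} (hk : k ≠ 0) :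
    (univ.val.map x).esymm k = 0 := by
  have newton := congrArg (MvPolynomial.aeval x) (MvPolynomial.mul_esymm_eq_sum σ ℚ k)
  simp only [map_mul, map_sum, map_natCast, map_pow, map_neg, map_one,
    MvPolynomial.aeval_esymm_eq_multiset_esymm, MvPolynomial.psum, MvPolynomial.aeval_X] at newton
  rw [sum_eq_zero, mul_zero] at newton
  · have hunit : IsUnit (k : A) := by
      simpa using ((Nat.cast_ne_zero.2 hk : (k : ℚ) ≠ 0).isUnit.map (algebraMap ℚ A))
    exact hunit.mul_right_eq_zero.1 newton
  · intro p hp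
    simp only [mem_filter, HasAntidiagonal.mem_antidiagonal] at hp
    rw [h p.2 (by omega), mul_zero]

theorem pow_card_eq_zero_of_sum_pow_eq_zero {σ : Type*} [Fintype σ] (x : σ → A)
    (h : ∀ m ≠ 0, ∑ t, x t ^ m = 0) (t : σ) : x t ^ Fintype.card σ = 0 := by
  simpa using Multiset.pow_card_eq_zero_of_esymm_eq_zero
    (fun k hk => esymm_eq_zero_of_sum_pow_eq_zero x h hk)
    (Multiset.mem_map_of_mem x (mem_univ t))

theorem isNilpotent_of_sum_pow_eq_zero {ι : Type*} (s : Finset ι) (x : ι → A) {N : ℕ}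
    (h : ∀ m ≥ N, ∑ t ∈ s, x t ^ m = 0) {t : ι} (ht : t ∈ s) : IsNilpotent (x t) := by
  have hpow : ∀ m ≠ 0, ∑ u : s, (x u ^ (N + 1)) ^ m = 0 := fun m hm => by
    simp_rw [← pow_mul]
    rw [sum_coe_sort s (fun u => x u ^ ((N + 1) * m))]
    exact h _ (by nlinarith [Nat.one_le_iff_ne_zero.2 hm])
  exact IsNilpotent.of_pow ⟨_, pow_card_eq_zero_of_sum_pow_eq_zero _ hpow ⟨t, ht⟩⟩

theorem range_sub_eq_setOf_sum_Ico_eq_zero (φ : A →+* A) {i j : ℕ} (hij : i < j)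
    (hφ : φ ^ i = φ ^ j) :
    Set.range (fun a => a - φ a) = {y | ∑ k ∈ Ico i j, (φ ^ k) y = 0} := by
  ext y
  constructor
  · rintro ⟨c, rfl⟩
    rw [Set.mem_ofPred_eq, sum_Ico_pow_apply_sub_apply φ c hij.le, hφ, sub_self]
  · intro (hy : ∑ k ∈ Ico i j, (φ ^ k) y = 0)
    have hd : ((j - i : ℕ) : ℚ) ≠ 0 := Nat.cast_ne_zero.2 (by omega)
    refine ⟨((j - i : ℕ) : ℚ)⁻¹ • ∑ k ∈ Ico i j, ∑ s ∈ range k, (φ ^ s) y, ?_⟩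
    dsimp only
    rw [map_rat_smul, ← smul_sub, map_sum, ← sum_sub_distrib]
    simp_rw [sum_range_pow_apply_sub_apply]
    rw [sum_sub_distrib, hy, sub_zero, sum_const, Nat.card_Ico, ← Nat.cast_smul_eq_nsmul ℚ,
      smul_smul, inv_mul_cancel₀ hd, one_smul]

end

theorem stmt6_general (A : Type*) [CommRing A] [Algebra ℚ A] (φ : A →+* A)
    (i j : ℕ) (hij : i < j) (hφ : φ ^ i = φ ^ j)
    (M : Set A) (hM : M = Set.range (fun a => a - φ a)) :
    ∀ a : A, (∃ N : ℕ, ∀ m ≥ N, a ^ m ∈ M) →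
      ∀ b : A, ∃ N : ℕ, ∀ m ≥ N, b * a ^ m ∈ M := by
  subst hM
  rintro a ⟨N, hN⟩ b
  simp only [range_sub_eq_setOf_sum_Ico_eq_zero φ hij hφ, Set.mem_ofPred_eq] at hN ⊢
  have hnil : ∀ k ∈ Ico i j, IsNilpotent ((φ ^ k) a) := fun k hk =>
    isNilpotent_of_sum_pow_eq_zero (Ico i j) (fun k => (φ ^ k) a)
      (fun m hm => by simpa only [map_pow] using hN m hm) hk
  have hvanish : ∀ᶠ m in atTop, ∀ k ∈ Ico i j, (φ ^ k) (b * a ^ m) = 0 :=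
    (eventually_all_finset _).2 fun k hk => by
      obtain ⟨n, hn⟩ := hnil k hk
      filter_upwards [eventually_ge_atTop n] with m hm
      rw [map_mul, map_pow, pow_eq_zero_of_le hm hn, mul_zero]
  obtain ⟨N', hN'⟩ := eventually_atTop.1 hvanish
  exact ⟨N', fun m hm => sum_eq_zero (hN' m hm)⟩

theorem stmt6 (A : Type*) [CommRing A] [Algebra ℚ A] (φ : A →+* A)
    (i j : ℕ) (hi : 1 ≤ i) (hij : i < j) (hφ : φ ^ i = φ ^ j)
    (M : Set A) (hM : M = Set.range (fun a => a - φ a)) :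
    ∀ a : A, (∃ N : ℕ, ∀ m ≥ N, a ^ m ∈ M) →
      ∀ b : A, ∃ N : ℕ, ∀ m ≥ N, b * a ^ m ∈ M :=
  stmt6_general A φ i j hij hφ M hM
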